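/- arXiv:1106.1192 — 2 statements merged into one kernel-verified Lean document; each statement's English description precedes it below -/
import Mathlib

section
/- Let B = B(c, ξ) ⊆ ℝ² be a closed ball, let p be a point with |p − c| = ξ (on the boundary), let y be a point on the radius segment from c to p (so y ∈ [c, p]), and let s be a point with |s − c| ≥ ξ (outside or on the boundary of the ball). Then |s − y| ≥ (|s − p| + |p − y|)/3. -/
open MeasureTheory Set

noncomputable section

abbrev Pt := EuclideanSpace ℝ (Fin 2)

/-- The closed axis-parallel square of center `z` and side length `r`. -/
def SquareD (z : Pt) (r : ℝ) : Set Pt := {w | ∀ i, |w i - z i| ≤ r / 2}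

/-- `f` is `L` bi-Lipschitz on `s`. -/
def BiLipOn (L : ℝ) (s : Set Pt) (f : Pt → Pt) : Prop :=
  ∀ x ∈ s, ∀ y ∈ s,
    (1 / L) * dist x y ≤ dist (f x) (f y) ∧ dist (f x) (f y) ≤ L * dist x y

theorem stmt11 (c p y s : Pt) (ξ : ℝ) (hp : ‖p - c‖ = ξ)
    (hy : y ∈ segment ℝ c p) (hs : ξ ≤ ‖s - c‖) :
    ‖s - y‖ ≥ (‖s - p‖ + ‖p - y‖) / 3 := by
  have hseg := dist_add_dist_of_mem_segment hy
  have h1 : ‖p - y‖ ≤ ‖s - y‖ := by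
    have t1 : ‖s - c‖ ≤ ‖s - y‖ + ‖y - c‖ := norm_sub_le_norm_sub_add_norm_sub s y c
    have : dist c y + dist y p = ξ := by rw [hseg, dist_comm c p, ← hp]; rfl
    simp only [dist_eq_norm] at this
    have : ‖y - p‖ = ξ - ‖c - y‖ := by linarith
    rw [← norm_neg (p - y), neg_sub, this, ← norm_neg (y - c), neg_sub] at *
    linarith
  have h2 : ‖s - p‖ ≤ ‖s - y‖ + ‖y - p‖ := norm_sub_le_norm_sub_add_norm_sub s y p
  rw [← norm_neg (y - p), neg_sub] at h2
  linarith
end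
end

section
/- Let u : [0, 1] → ℝ² be an injective L bi-Lipschitz curve (reparametrizing a segment pq), and construct points 0 = t₀ < t₁ < ... < t_N = 1 greedily by t_{i+1} = max{ t ∈ (t_i, 1] : |u(t_i) − u(t)| ≤ ρ }. If z ∈ [t_i, t_{i+1}] and z' ∈ [t_{i+1}, t_{i+2}] belong to consecutive parameter intervals, then the angle ∠(u_ρ(z), u(t_{i+1}), u_ρ(z')) is at least π/3, where u_ρ is the piecewise affine interpolation of u at the points t_i. Consequently, |u_ρ(z) − u_ρ(z')| ≥ (|u_ρ(z) − u(t_{i+1})| + |u(t_{i+1}) − u_ρ(z')|)/2. -/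
open MeasureTheory Set

noncomputable section

set_option maxHeartbeats 2000000 in
theorem stmt14 (L ρ : ℝ) (hL : 1 ≤ L) (hρ : 0 < ρ) (u : ℝ → Pt)
    (hu : ∀ s ∈ Icc (0 : ℝ) 1, ∀ t ∈ Icc (0 : ℝ) 1,
      (1 / L) * |s - t| ≤ dist (u s) (u t) ∧ dist (u s) (u t) ≤ L * |s - t|)
    (N : ℕ) (hN : 1 ≤ N) (t : ℕ → ℝ) (ht0 : t 0 = 0) (htN : t N = 1)
    (hmono : ∀ j < N, t j < t (j + 1))
    (hgreedy : ∀ j < N,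
      IsGreatest {s | s ∈ Ioc (t j) 1 ∧ dist (u (t j)) (u s) ≤ ρ} (t (j + 1))) :
    ∀ i, i + 2 ≤ N → ∀ s ∈ Icc (0 : ℝ) 1, ∀ s' ∈ Icc (0 : ℝ) 1,
      EuclideanGeometry.angle
          (u (t i) + s • (u (t (i + 1)) - u (t i)))
          (u (t (i + 1)))
          (u (t (i + 1)) + s' • (u (t (i + 2)) - u (t (i + 1)))) ≥ Real.pi / 3 ∧
        dist (u (t i) + s • (u (t (i + 1)) - u (t i)))
            (u (t (i + 1)) + s' • (u (t (i + 2)) - u (t (i + 1)))) ≥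
          (dist (u (t i) + s • (u (t (i + 1)) - u (t i))) (u (t (i + 1))) +
            dist (u (t (i + 1)))
              (u (t (i + 1)) + s' • (u (t (i + 2)) - u (t (i + 1))))) / 2 := by
  intro i hi2 s hs s' hs'
  have hL0 : (0:ℝ) < L := lt_of_lt_of_le one_pos hL
  have hiN : i < N := by omega
  have hi1N : i + 1 < N := by omega
  have hg1 := hgreedy i hiN
  have hg2 := hgreedy (i + 1) hi1N
  set p := u (t i) with hp
  set q := u (t (i + 1)) with hq
  set r := u (t (i + 2)) with hr
  have ht2le1 : t (i + 2) ≤ 1 := hg2.1.1.2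
  have ht12 : t (i + 1) < t (i + 2) := hg2.1.1.1
  have ht01 : t i < t (i + 1) := hmono i hiN
  have ht1lt1 : t (i + 1) < 1 := lt_of_lt_of_le ht12 ht2le1
  have hnn : ∀ j, j ≤ N → 0 ≤ t j := by
    intro j hj
    induction j with
    | zero => simp [ht0]
    | succ k ih =>
      have h1 := hmono k (by omega)
      have h2 := ih (by omega)
      linarith
  have hti : t i ∈ Icc (0:ℝ) 1 := ⟨hnn i (by omega), by linarith⟩
  have hti1 : t (i + 1) ∈ Icc (0:ℝ) 1 := ⟨hnn (i+1) (by omega), ht1lt1.le⟩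
  have hti2 : t (i + 2) ∈ Icc (0:ℝ) 1 := ⟨hnn (i+2) (by omega), ht2le1⟩
  -- dist p q = ρ
  have hpq_le : dist p q ≤ ρ := hg1.1.2
  have hpq : dist p q = ρ := by
    by_contra hne
    have hlt : dist p q < ρ := lt_of_le_of_ne hpq_le hne
    set ε := (ρ - dist p q) / L with hε_def
    have hε : 0 < ε := div_pos (by linarith) hL0
    set t' := min 1 (t (i + 1) + ε) with ht'def
    have ht'gt : t (i + 1) < t' := lt_min ht1lt1 (by linarith)
    have ht'le1 : t' ≤ 1 := min_le_left _ _
    have ht'mem : t' ∈ Icc (0:ℝ) 1 := ⟨by linarith [hti1.1], ht'le1⟩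
    have hd : dist q (u t') ≤ L * |t (i + 1) - t'| := (hu _ hti1 _ ht'mem).2
    have habs : |t (i + 1) - t'| ≤ ε := by
      rw [abs_sub_comm, abs_of_pos (by linarith)]
      have := min_le_right 1 (t (i + 1) + ε)
      linarith
    have hLε : L * ε = ρ - dist p q := by
      rw [hε_def]; field_simp
    have hdist : dist p (u t') ≤ ρ := by
      have h1 : dist p (u t') ≤ dist p q + dist q (u t') := dist_triangle _ _ _
      have h2 : L * |t (i + 1) - t'| ≤ L * ε :=
        mul_le_mul_of_nonneg_left habs hL0.le
      linarith
    have := hg1.2 ⟨⟨lt_trans ht01 ht'gt, ht'le1⟩, hdist⟩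
    linarith
  -- dist p r > ρ
  have hpr : ρ < dist p r := by
    by_contra h
    push_neg at h
    have := hg1.2 ⟨⟨lt_trans ht01 ht12, ht2le1⟩, h⟩
    linarith
  -- dist q r ∈ (0, ρ]
  have hqr_le : dist q r ≤ ρ := hg2.1.2
  have hqr_pos : 0 < dist q r := by
    have h1 := (hu _ hti1 _ hti2).1
    have h2 : |t (i + 1) - t (i + 2)| = t (i + 2) - t (i + 1) := by
      rw [abs_sub_comm, abs_of_pos (by linarith)]
    rw [h2] at h1
    have h3 : 0 < (1 / L) * (t (i + 2) - t (i + 1)) :=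
      mul_pos (div_pos one_pos hL0) (by linarith)
    linarith
  -- cos of angle p q r < 1/2
  have hlaw := EuclideanGeometry.law_cos p q r
  have hcos : Real.cos (EuclideanGeometry.angle p q r) < 1 / 2 := by
    have hc1 : ρ * ρ < dist p r * dist p r := by nlinarith
    have hc2 : dist r q * dist r q ≤ ρ * dist r q := by
      rw [dist_comm r q]; nlinarith
    rw [hpq, dist_comm r q] at hlaw
    rw [dist_comm r q] at hc2
    nlinarith [mul_pos hρ hqr_pos]
  have hangle_pqr : Real.pi / 3 ≤ EuclideanGeometry.angle p q r := by
    by_contra h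
    push_neg at h
    have h2 := Real.cos_lt_cos_of_nonneg_of_le_pi
      (EuclideanGeometry.angle_nonneg p q r)
      (by linarith [Real.pi_pos] : Real.pi / 3 ≤ Real.pi) h
    rw [Real.cos_pi_div_three] at h2
    linarith
  set x := p + s • (q - p) with hx
  set y := q + s' • (r - q) with hy
  have hxq : x - q = (1 - s) • (p - q) := by
    rw [hx]; module
  have hyq : y - q = s' • (r - q) := by
    rw [hy, add_sub_cancel_left]
  -- main angle bound
  have hmain : Real.pi / 3 ≤ EuclideanGeometry.angle x q y := by
    unfold EuclideanGeometry.angle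
    rw [vsub_eq_sub, vsub_eq_sub, hxq, hyq]
    rcases eq_or_lt_of_le hs.2 with h1 | h1
    · have h0 : (1 : ℝ) - s = 0 := by linarith
      rw [h0, zero_smul, InnerProductGeometry.angle_zero_left]
      linarith [Real.pi_pos]
    · rcases eq_or_lt_of_le hs'.1 with h2 | h2
      · rw [← h2, zero_smul, InnerProductGeometry.angle_zero_right]
        linarith [Real.pi_pos]
      · rw [InnerProductGeometry.angle_smul_left_of_pos _ _ (by linarith : (0:ℝ) < 1 - s),
          InnerProductGeometry.angle_smul_right_of_pos _ _ h2]
        exact hangle_pqr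
  refine ⟨hmain, ?_⟩
  -- second part: distance bound
  have hθle : EuclideanGeometry.angle x q y ≤ Real.pi := EuclideanGeometry.angle_le_pi x q y
  have hcos2 : Real.cos (EuclideanGeometry.angle x q y) ≤ 1 / 2 := by
    have h2 := Real.cos_le_cos_of_nonneg_of_le_pi
      (by linarith [Real.pi_pos] : (0:ℝ) ≤ Real.pi / 3) hθle hmain
    rwa [Real.cos_pi_div_three] at h2
  have hlaw2 := EuclideanGeometry.law_cos x q y
  rw [dist_comm y q] at hlaw2
  have hxq0 : 0 ≤ dist x q := dist_nonneg
  have hqy0 : 0 ≤ dist q y := dist_nonneg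
  have hxy0 : 0 ≤ dist x y := dist_nonneg
  have hkey : ((dist x q + dist q y) / 2) ^ 2 ≤ dist x y ^ 2 := by
    nlinarith [mul_le_mul_of_nonneg_left hcos2 (mul_nonneg hxq0 hqy0),
      sq_nonneg (dist x q - dist q y), mul_nonneg hxq0 hqy0]
  have := Real.sqrt_le_sqrt hkey
  rwa [Real.sqrt_sq hxy0, Real.sqrt_sq (by positivity)] at this
end
end
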